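/- Let ∇ be a Cartan connection on L. If X, Y ∈ L are ∇-parallel, i.e. ∇_V X = 0 and ∇_V Y = 0 for all V ∈ Der_R(A), then ⁅X, Y⁆ is also ∇-parallel. Hence the set of ∇-parallel elements of L is an R-Lie subalgebra of L. (Section 2.4: the ∇-parallel sections of a Cartan algebroid form a Lie subalgebra, the symmetric part.) -/
import Mathlib


variable {R A L : Type*} [CommRing R] [CommRing A] [Algebra R A]
  [LieRing L] [LieAlgebra R L] [Module A L]
  [IsScalarTower R A L] [SMulCommClass R A L] [SMulCommClass A R L]

/-- The induced `𝔤`-connection on derivations: `∇̄_X V := ρ(∇_V X) + ⁅ρ(X), V⁆`. -/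
def barDer (ρ : L →ₗ[A] Derivation R A A) (D : Derivation R A A → L → L)
    (X : L) (V : Derivation R A A) : Derivation R A A :=
  ρ (D V X) + ⁅ρ X, V⁆

/-- The induced `𝔤`-connection of `L` on itself: `∇̄_X Y := ∇_{ρ(Y)} X + ⁅X, Y⁆`. -/
def barSelf (ρ : L →ₗ[A] Derivation R A A) (D : Derivation R A A → L → L)
    (X Y : L) : L :=
  D (ρ Y) X + ⁅X, Y⁆

/-- `D` is a connection on `L`: additive in both arguments, `A`-linear in the
derivation argument, and satisfying the Leibniz rule. -/
def IsConnection (D : Derivation R A A → L → L) : Prop :=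
  (∀ (V W : Derivation R A A) (X : L), D (V + W) X = D V X + D W X) ∧
  (∀ (V : Derivation R A A) (X Y : L), D V (X + Y) = D V X + D V Y) ∧
  (∀ (a : A) (V : Derivation R A A) (X : L), D (a • V) X = a • D V X) ∧
  (∀ (V : Derivation R A A) (a : A) (X : L), D V (a • X) = a • D V X + V a • X)

/-- `D` is a Cartan connection: it is compatible with the bracket of `L`. -/
def IsCartanConnection (ρ : L →ₗ[A] Derivation R A A)
    (D : Derivation R A A → L → L) : Prop :=
  ∀ (V : Derivation R A A) (X Y : L),
    D V ⁅X, Y⁆ = ⁅D V X, Y⁆ + ⁅X, D V Y⁆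
      + D (barDer ρ D Y V) X - D (barDer ρ D X V) Y

/-- For a Cartan connection `∇`, the bracket of two `∇`-parallel
elements is `∇`-parallel; hence the set of `∇`-parallel elements of `L` is an
`R`-Lie subalgebra of `L`. -/
theorem parallel_sections_lie_subalgebra
(ρ : L →ₗ[A] Derivation R A A)
    (hanchor : ∀ X Y : L, ρ ⁅X, Y⁆ = ⁅ρ X, ρ Y⁆)
    (hleib : ∀ (X : L) (a : A) (Y : L), ⁅X, a • Y⁆ = a • ⁅X, Y⁆ + ρ X a • Y)
    (D : Derivation R A A → L → L) (hD : IsConnection D)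
    (hC : IsCartanConnection ρ D) :
    (∀ X Y : L, (∀ V : Derivation R A A, D V X = 0) →
      (∀ V : Derivation R A A, D V Y = 0) →
      ∀ V : Derivation R A A, D V ⁅X, Y⁆ = 0) ∧
    (∃ S : LieSubalgebra R L,
      (S : Set L) = {X : L | ∀ V : Derivation R A A, D V X = 0}) := by
  obtain ⟨hDadd, hLadd, hAsmul, hLeib⟩ := hD
  have hzero : ∀ V : Derivation R A A, D V (0 : L) = 0 := by
    intro V
    have := hLadd V 0 0
    rw [add_zero] at this
    exact (left_eq_add.mp this)
  have key : ∀ X Y : L, (∀ V : Derivation R A A, D V X = 0) →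
      (∀ V : Derivation R A A, D V Y = 0) →
      ∀ V : Derivation R A A, D V ⁅X, Y⁆ = 0 := by
    intro X Y hX hY V
    rw [hC V X Y, hX, hY, hX, hY, lie_zero, zero_lie, add_zero, zero_add, sub_self]
  refine ⟨key, ⟨{
    carrier := {X : L | ∀ V : Derivation R A A, D V X = 0}
    add_mem' := fun {a b} ha hb V => by rw [hLadd, ha, hb, add_zero]
    zero_mem' := fun V => hzero V
    smul_mem' := by
      intro r X hX V
      have : (r : R) • X = (algebraMap R A r) • X := (algebraMap_smul A r X).symm
      rw [this, hLeib, hX V, smul_zero, zero_add, Derivation.map_algebraMap, zero_smul]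
    lie_mem' := fun {X Y} hX hY V => key X Y hX hY V }, rfl⟩⟩
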